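/- Let σ ∈ BS-bar^{m₁,m₂}_{1,0,θ} with θ ∈ (-π/2,π/2) \ {0,-π/4}, and define σ₁*(x,ξ,η) as the (oscillatory-integral) symbol of the first adjoint. Then the 'principal term' τ(x,ξ,η) := conj(σ(x, -ξ-η, η)) belongs to BS-bar^{(m₁,m₂),1}_{1,0,θ*¹}, where cot θ + cot θ*¹ = -1. -/

import Mathlib

open Real

noncomputable section

def pd1 (f : ℝ → ℝ → ℝ → ℂ) : ℝ → ℝ → ℝ → ℂ :=
  fun x α β => deriv (fun t => f t α β) x

def pd2 (f : ℝ → ℝ → ℝ → ℂ) : ℝ → ℝ → ℝ → ℂ :=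
  fun x α β => deriv (fun t => f x t β) α

def pd3 (f : ℝ → ℝ → ℝ → ℂ) : ℝ → ℝ → ℝ → ℂ :=
  fun x α β => deriv (fun t => f x α t) β

/-- The directional derivative `∂_{β-α} = ∂_β - ∂_α`. -/
def pdd (f : ℝ → ℝ → ℝ → ℂ) : ℝ → ℝ → ℝ → ℂ :=
  fun x α β => pd3 f x α β - pd2 f x α β

/-- The estimates defining the class `BS-bar^{m₁,m₂}_{1,0,θ}` where `t = tan θ`. -/
def BSbar (m₁ m₂ t : ℝ) (σ : ℝ → ℝ → ℝ → ℂ) : Prop :=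
  ∀ a b c : ℕ, ∃ C : ℝ, 0 < C ∧ ∀ x α β : ℝ,
    ‖(pd1^[a] (pd2^[b] (pd3^[c] σ))) x α β‖ ≤
      C * (1 + |α|) ^ m₁ * (1 + |β|) ^ m₂ *
        (1 + min |α| |β - t * α|) ^ (-(b : ℝ)) *
        (1 + min |β| |β - t * α|) ^ (-(c : ℝ))

/-- The estimates defining the class `BS-bar^{(m₁,m₂),1}_{1,0,φ}` where `t = tan φ`. -/
def BSbar1 (m₁ m₂ t : ℝ) (σ : ℝ → ℝ → ℝ → ℂ) : Prop :=
  ∀ a b c : ℕ, ∃ C : ℝ, 0 < C ∧ ∀ x α β : ℝ,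
    ‖(pd1^[a] (pd2^[b] (pdd^[c] σ))) x α β‖ ≤
      C * (1 + |α + β|) ^ m₁ * (1 + |β|) ^ m₂ *
        (1 + min |α + β| |β - t * α|) ^ (-(b : ℝ)) *
        (1 + min |β| |β - t * α|) ^ (-(c : ℝ))

namespace AdjointAux

abbrev E3 : Type := ℝ × ℝ × ℝ

def curryF (F : E3 → ℂ) : ℝ → ℝ → ℝ → ℂ := fun x α β => F (x, α, β)

def Lv (v : E3) (F : E3 → ℂ) : E3 → ℂ := fun p => fderiv ℝ F p v

def Tlin : E3 →ₗ[ℝ] E3 where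
  toFun p := (p.1, -p.2.1 - p.2.2, p.2.2)
  map_add' p q := by simp [Prod.ext_iff]; ring
  map_smul' c p := by simp [Prod.ext_iff, smul_eq_mul]; ring

def T : E3 →L[ℝ] E3 := Tlin.toContinuousLinearMap

@[simp] lemma T_apply (p : E3) : T p = (p.1, -p.2.1 - p.2.2, p.2.2) := rfl

lemma contDiff_Lv {F : E3 → ℂ} (hF : ContDiff ℝ (⊤ : ℕ∞) F) (v : E3) :
    ContDiff ℝ (⊤ : ℕ∞) (Lv v F) :=
  (hF.fderiv_right (by simp)).clm_apply contDiff_const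

lemma contDiff_iter_Lv {F : E3 → ℂ} (hF : ContDiff ℝ (⊤ : ℕ∞) F) (v : E3) (k : ℕ) :
    ContDiff ℝ (⊤ : ℕ∞) ((Lv v)^[k] F) := by
  induction k generalizing F with
  | zero => exact hF
  | succ n ih => rw [Function.iterate_succ_apply]; exact ih (contDiff_Lv hF v)

lemma pd1_curry {F : E3 → ℂ} (hF : ContDiff ℝ (⊤ : ℕ∞) F) :
    pd1 (curryF F) = curryF (Lv (1, 0, 0) F) := by
  funext x α β
  have h1 : HasDerivAt (fun t : ℝ => ((t, α, β) : E3)) (1, 0, 0) x :=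
    HasDerivAt.prodMk (hasDerivAt_id x) (hasDerivAt_const x ((α, β) : ℝ × ℝ))
  exact ((hF.differentiable (by simp) (x, α, β)).hasFDerivAt.comp_hasDerivAt x h1).deriv

lemma pd2_curry {F : E3 → ℂ} (hF : ContDiff ℝ (⊤ : ℕ∞) F) :
    pd2 (curryF F) = curryF (Lv (0, 1, 0) F) := by
  funext x α β
  have h1 : HasDerivAt (fun t : ℝ => ((x, t, β) : E3)) (0, 1, 0) α :=
    HasDerivAt.prodMk (hasDerivAt_const α x) (HasDerivAt.prodMk (hasDerivAt_id α) (hasDerivAt_const α β))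
  exact ((hF.differentiable (by simp) (x, α, β)).hasFDerivAt.comp_hasDerivAt α h1).deriv

lemma pd3_curry {F : E3 → ℂ} (hF : ContDiff ℝ (⊤ : ℕ∞) F) :
    pd3 (curryF F) = curryF (Lv (0, 0, 1) F) := by
  funext x α β
  have h1 : HasDerivAt (fun t : ℝ => ((x, α, t) : E3)) (0, 0, 1) β :=
    HasDerivAt.prodMk (hasDerivAt_const β x) (HasDerivAt.prodMk (hasDerivAt_const β α) (hasDerivAt_id β))
  exact ((hF.differentiable (by simp) (x, α, β)).hasFDerivAt.comp_hasDerivAt β h1).deriv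

lemma pdd_curry {F : E3 → ℂ} (hF : ContDiff ℝ (⊤ : ℕ∞) F) :
    pdd (curryF F) = curryF (Lv (0, -1, 1) F) := by
  funext x α β
  show pd3 (curryF F) x α β - pd2 (curryF F) x α β = _
  rw [pd3_curry hF, pd2_curry hF]
  show fderiv ℝ F (x, α, β) (0, 0, 1) - fderiv ℝ F (x, α, β) (0, 1, 0) = _
  rw [← map_sub]
  norm_num [Prod.ext_iff, curryF, Lv]

lemma iter_curry (pdop : (ℝ → ℝ → ℝ → ℂ) → (ℝ → ℝ → ℝ → ℂ)) (v : E3)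
    (h : ∀ F : E3 → ℂ, ContDiff ℝ (⊤ : ℕ∞) F → pdop (curryF F) = curryF (Lv v F)) :
    ∀ (k : ℕ) (F : E3 → ℂ), ContDiff ℝ (⊤ : ℕ∞) F →
      pdop^[k] (curryF F) = curryF ((Lv v)^[k] F) := by
  intro k
  induction k with
  | zero => intro F _; rfl
  | succ n ih =>
    intro F hF
    rw [Function.iterate_succ_apply, Function.iterate_succ_apply, h F hF,
      ih _ (contDiff_Lv hF v)]

lemma Lv_conj_T (v : E3) (F : E3 → ℂ) (hF : ContDiff ℝ (⊤ : ℕ∞) F) :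
    Lv v (fun p => (starRingEnd ℂ) (F (T p))) =
      fun p => (starRingEnd ℂ) (Lv (T v) F (T p)) := by
  funext p
  have hFT : HasFDerivAt (fun q => F (T q)) ((fderiv ℝ F (T p)).comp T) p :=
    (hF.differentiable (by simp) (T p)).hasFDerivAt.comp p T.hasFDerivAt
  have hc : HasFDerivAt (fun q => (starRingEnd ℂ) (F (T q)))
      ((Complex.conjCLE.toContinuousLinearMap).comp ((fderiv ℝ F (T p)).comp T)) p :=
    (Complex.conjCLE.toContinuousLinearMap.hasFDerivAt).comp p hFT
  show fderiv ℝ (fun q => (starRingEnd ℂ) (F (T q))) p v = _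
  rw [hc.fderiv]
  rfl

lemma iter_Lv_conj_T (v : E3) :
    ∀ (k : ℕ) (F : E3 → ℂ), ContDiff ℝ (⊤ : ℕ∞) F →
      (Lv v)^[k] (fun p => (starRingEnd ℂ) (F (T p))) =
        fun p => (starRingEnd ℂ) ((Lv (T v))^[k] F (T p)) := by
  intro k
  induction k with
  | zero => intro F _; rfl
  | succ n ih =>
    intro F hF
    rw [Function.iterate_succ_apply, Function.iterate_succ_apply, Lv_conj_T v F hF,
      ih _ (contDiff_Lv hF (T v))]

lemma Lv_neg (v : E3) (G : E3 → ℂ) :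
    Lv v (fun p => -(G p)) = fun p => -(Lv v G p) := by
  funext p
  show fderiv ℝ (fun p => -(G p)) p v = -(fderiv ℝ G p v)
  rw [fderiv_fun_neg]
  rfl

lemma iter_Lv_neg (v : E3) :
    ∀ (k : ℕ) (G : E3 → ℂ),
      (Lv v)^[k] (fun p => -(G p)) = fun p => -((Lv v)^[k] G p) := by
  intro k
  induction k with
  | zero => intro G; rfl
  | succ n ih =>
    intro G
    rw [Function.iterate_succ_apply, Function.iterate_succ_apply, Lv_neg v G, ih]

lemma Lv_negv (v : E3) (F : E3 → ℂ) :
    Lv (-v) F = fun p => -(Lv v F p) := by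
  funext p
  show fderiv ℝ F p (-v) = -(fderiv ℝ F p v)
  rw [map_neg]

lemma norm_iter_Lv_negv (v w : E3) :
    ∀ (a k : ℕ) (F : E3 → ℂ) (p : E3),
      ‖(Lv w)^[a] ((Lv (-v))^[k] F) p‖ = ‖(Lv w)^[a] ((Lv v)^[k] F) p‖ := by
  intro a k
  induction k with
  | zero => intro F p; rfl
  | succ n ih =>
    intro F p
    rw [Function.iterate_succ_apply, Function.iterate_succ_apply, Lv_negv v F,
      ih (fun p => -(Lv v F p)) p, iter_Lv_neg, iter_Lv_neg]
    simp

lemma contDiff_conj_T {F : E3 → ℂ} (hF : ContDiff ℝ (⊤ : ℕ∞) F) :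
    ContDiff ℝ (⊤ : ℕ∞) (fun p => (starRingEnd ℂ) (F (T p))) :=
  (Complex.conjCLE.toContinuousLinearMap.contDiff).comp (hF.comp T.contDiff)

lemma master (σ : ℝ → ℝ → ℝ → ℂ)
    (hσs : ContDiff ℝ (⊤ : ℕ∞) (fun p : ℝ × ℝ × ℝ => σ p.1 p.2.1 p.2.2))
    (a b c : ℕ) (x α β : ℝ) :
    ‖(pd1^[a] (pd2^[b] (pdd^[c] (fun x ξ η => (starRingEnd ℂ) (σ x (-ξ - η) η))))) x α β‖
      = ‖(pd1^[a] (pd2^[b] (pd3^[c] σ))) x (-α - β) β‖ := by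
  set S : E3 → ℂ := fun p => σ p.1 p.2.1 p.2.2 with hSdef
  have hS : ContDiff ℝ (⊤ : ℕ∞) S := hσs
  have hτ : (fun x ξ η => (starRingEnd ℂ) (σ x (-ξ - η) η))
      = curryF (fun p => (starRingEnd ℂ) (S (T p))) := rfl
  have hTw : T ((0, -1, 1) : E3) = ((0, 0, 1) : E3) := by
    rw [T_apply]; norm_num
  have hTe2 : T ((0, 1, 0) : E3) = -((0, 1, 0) : E3) := by
    rw [T_apply]; norm_num [Prod.ext_iff]
  have hTe1 : T ((1, 0, 0) : E3) = ((1, 0, 0) : E3) := by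
    rw [T_apply]; norm_num
  set F₁ : E3 → ℂ := (Lv (0, 0, 1))^[c] S with hF₁def
  have hF₁ : ContDiff ℝ (⊤ : ℕ∞) F₁ := contDiff_iter_Lv hS _ c
  set F₂ : E3 → ℂ := (Lv (0, 1, 0))^[b] F₁ with hF₂def
  have hF₂ : ContDiff ℝ (⊤ : ℕ∞) F₂ := contDiff_iter_Lv hF₁ _ b
  -- τ side
  have s1 : pdd^[c] (fun x ξ η => (starRingEnd ℂ) (σ x (-ξ - η) η))
      = curryF (fun p => (starRingEnd ℂ) (F₁ (T p))) := by
    rw [hτ, iter_curry pdd (0, -1, 1) (fun F hF => pdd_curry hF) c _ (contDiff_conj_T hS),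
      iter_Lv_conj_T _ c S hS, hTw]
  have s2 : pd2^[b] (pdd^[c] (fun x ξ η => (starRingEnd ℂ) (σ x (-ξ - η) η)))
      = curryF (fun p => (starRingEnd ℂ) ((Lv (-((0, 1, 0) : E3)))^[b] F₁ (T p))) := by
    rw [s1, iter_curry pd2 (0, 1, 0) (fun F hF => pd2_curry hF) b _ (contDiff_conj_T hF₁),
      iter_Lv_conj_T _ b F₁ hF₁, hTe2]
  have hF₁' : ContDiff ℝ (⊤ : ℕ∞) ((Lv (-((0, 1, 0) : E3)))^[b] F₁) := contDiff_iter_Lv hF₁ _ b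
  have s3 : pd1^[a] (pd2^[b] (pdd^[c] (fun x ξ η => (starRingEnd ℂ) (σ x (-ξ - η) η))))
      = curryF (fun p => (starRingEnd ℂ)
          ((Lv ((1, 0, 0) : E3))^[a] ((Lv (-((0, 1, 0) : E3)))^[b] F₁) (T p))) := by
    rw [s2, iter_curry pd1 (1, 0, 0) (fun F hF => pd1_curry hF) a _ (contDiff_conj_T hF₁'),
      iter_Lv_conj_T _ a _ hF₁', hTe1]
  -- σ side
  have t1 : pd3^[c] σ = curryF F₁ :=
    iter_curry pd3 (0, 0, 1) (fun F hF => pd3_curry hF) c S hS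
  have t2 : pd2^[b] (pd3^[c] σ) = curryF F₂ := by
    rw [t1]; exact iter_curry pd2 (0, 1, 0) (fun F hF => pd2_curry hF) b F₁ hF₁
  have t3 : pd1^[a] (pd2^[b] (pd3^[c] σ)) = curryF ((Lv ((1, 0, 0) : E3))^[a] F₂) := by
    rw [t2]; exact iter_curry pd1 (1, 0, 0) (fun F hF => pd1_curry hF) a F₂ hF₂
  rw [s3, t3]
  show ‖(starRingEnd ℂ) ((Lv ((1, 0, 0) : E3))^[a] ((Lv (-((0, 1, 0) : E3)))^[b] F₁)
      (T (x, α, β)))‖ = ‖(Lv ((1, 0, 0) : E3))^[a] F₂ (x, -α - β, β)‖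
  rw [RCLike.norm_conj, norm_iter_Lv_negv (0, 1, 0) (1, 0, 0) a b F₁ (T (x, α, β))]
  rfl

lemma bound_aux (κ d A m : ℝ) (n : ℕ) (hκ0 : 0 < κ) (hκ1 : κ ≤ 1) (hκd : κ ≤ d)
    (hA : 0 ≤ A) (hm : 0 ≤ m) :
    (1 + min A (d * m)) ^ (-(n : ℝ)) ≤ κ ^ (-(n : ℝ)) * (1 + min A m) ^ (-(n : ℝ)) := by
  have hmin : 0 ≤ min A m := le_min hA hm
  have hk : κ * min A m ≤ min A (d * m) := by
    refine le_min ?_ ?_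
    · nlinarith [min_le_left A m]
    · nlinarith [min_le_right A m]
  have h1 : κ * (1 + min A m) ≤ 1 + min A (d * m) := by nlinarith
  have hpos : 0 < κ * (1 + min A m) := by nlinarith
  have hexp : -(n : ℝ) ≤ 0 := neg_nonpos.mpr (Nat.cast_nonneg n)
  calc (1 + min A (d * m)) ^ (-(n : ℝ))
      ≤ (κ * (1 + min A m)) ^ (-(n : ℝ)) :=
        Real.rpow_le_rpow_of_nonpos hpos h1 hexp
    _ = κ ^ (-(n : ℝ)) * (1 + min A m) ^ (-(n : ℝ)) :=
        Real.mul_rpow hκ0.le (by linarith)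

end AdjointAux

/-- The principal term of the first adjoint symbol, `conj σ(x, -ξ-η, η)`, belongs to
`BS-bar^{(m₁,m₂),1}_{1,0,θ*¹}` with `cot θ + cot θ*¹ = -1`. -/
theorem adjoint_principal_symbol (θ θs m₁ m₂ : ℝ)
    (hθ : θ ∈ Set.Ioo (-(π / 2)) (π / 2)) (hθ0 : θ ≠ 0) (hθ4 : θ ≠ -(π / 4))
    (hθs : θs ∈ Set.Ioo (-(π / 2)) (π / 2)) (hθs0 : θs ≠ 0)
    (hrel : Real.cos θ / Real.sin θ + Real.cos θs / Real.sin θs = -1)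
    (σ : ℝ → ℝ → ℝ → ℂ)
    (hσs : ContDiff ℝ (⊤ : ℕ∞) (fun p : ℝ × ℝ × ℝ => σ p.1 p.2.1 p.2.2))
    (hσ : BSbar m₁ m₂ (Real.tan θ) σ) :
    BSbar1 m₁ m₂ (Real.tan θs)
      (fun x ξ η => starRingEnd ℂ (σ x (-ξ - η) η)) := by
  have hcθ : 0 < Real.cos θ := Real.cos_pos_of_mem_Ioo hθ
  have hcθs : 0 < Real.cos θs := Real.cos_pos_of_mem_Ioo hθs
  have hπ := Real.pi_pos
  have hsθ : Real.sin θ ≠ 0 := by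
    intro h
    exact hθ0 ((Real.sin_eq_zero_iff_of_lt_of_lt (by linarith [hθ.1]) (by linarith [hθ.2])).mp h)
  have hsθs : Real.sin θs ≠ 0 := by
    intro h
    exact hθs0 ((Real.sin_eq_zero_iff_of_lt_of_lt (by linarith [hθs.1]) (by linarith [hθs.2])).mp h)
  have hst : Real.tan θs * (1 + Real.tan θ) = -Real.tan θ := by
    rw [Real.tan_eq_sin_div_cos, Real.tan_eq_sin_div_cos]
    have h := hrel
    field_simp at h ⊢
    linear_combination h
  have h1t : (1 : ℝ) + Real.tan θ ≠ 0 := by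
    intro h
    rw [h, mul_zero] at hst
    have : Real.tan θ = -1 := by linarith
    rw [this] at hst
    norm_num at hst
  intro a b c
  obtain ⟨C, hC, hbound⟩ := hσ a b c
  set t : ℝ := Real.tan θ with htdef
  set s : ℝ := Real.tan θs with hsdef
  set κ : ℝ := min 1 |1 + t| with hκdef
  have hκ0 : 0 < κ := lt_min one_pos (abs_pos.mpr h1t)
  have hκ1 : κ ≤ 1 := min_le_left _ _
  have hκd : κ ≤ |1 + t| := min_le_right _ _
  refine ⟨C * κ ^ (-(b : ℝ)) * κ ^ (-(c : ℝ)), by positivity, ?_⟩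
  intro x α β
  rw [AdjointAux.master σ hσs a b c x α β]
  have h0 := hbound x (-α - β) β
  have habs : |(-α - β)| = |α + β| := by rw [show -α - β = -(α + β) by ring, abs_neg]
  have hkey : β - t * (-α - β) = (1 + t) * (β - s * α) := by linear_combination α * hst
  have habs2 : |β - t * (-α - β)| = |1 + t| * |β - s * α| := by rw [hkey, abs_mul]
  rw [habs, habs2] at h0
  have hb1 := AdjointAux.bound_aux κ |1 + t| |α + β| |β - s * α| b hκ0 hκ1 hκd
    (abs_nonneg _) (abs_nonneg _)
  have hb2 := AdjointAux.bound_aux κ |1 + t| |β| |β - s * α| c hκ0 hκ1 hκd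
    (abs_nonneg _) (abs_nonneg _)
  have hP1 : (0:ℝ) ≤ (1 + |α + β|) ^ m₁ := by positivity
  have hP2 : (0:ℝ) ≤ (1 + |β|) ^ m₂ := by positivity
  have hL : (0:ℝ) ≤ C * (1 + |α + β|) ^ m₁ * (1 + |β|) ^ m₂ :=
    mul_nonneg (mul_nonneg hC.le hP1) hP2
  have hY0 : (0:ℝ) ≤ (1 + min |β| (|1 + t| * |β - s * α|)) ^ (-(c : ℝ)) := by
    have : (0:ℝ) ≤ min |β| (|1 + t| * |β - s * α|) := le_min (abs_nonneg _) (by positivity)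
    positivity
  have hX'0 : (0:ℝ) ≤ κ ^ (-(b : ℝ)) * (1 + min |α + β| |β - s * α|) ^ (-(b : ℝ)) := by
    have : (0:ℝ) ≤ min |α + β| |β - s * α| := le_min (abs_nonneg _) (abs_nonneg _)
    positivity
  refine h0.trans ?_
  calc C * (1 + |α + β|) ^ m₁ * (1 + |β|) ^ m₂ *
        (1 + min |α + β| (|1 + t| * |β - s * α|)) ^ (-(b : ℝ)) *
        (1 + min |β| (|1 + t| * |β - s * α|)) ^ (-(c : ℝ))
      ≤ C * (1 + |α + β|) ^ m₁ * (1 + |β|) ^ m₂ *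
        (κ ^ (-(b : ℝ)) * (1 + min |α + β| |β - s * α|) ^ (-(b : ℝ))) *
        (1 + min |β| (|1 + t| * |β - s * α|)) ^ (-(c : ℝ)) :=
        mul_le_mul_of_nonneg_right (mul_le_mul_of_nonneg_left hb1 hL) hY0
    _ ≤ C * (1 + |α + β|) ^ m₁ * (1 + |β|) ^ m₂ *
        (κ ^ (-(b : ℝ)) * (1 + min |α + β| |β - s * α|) ^ (-(b : ℝ))) *
        (κ ^ (-(c : ℝ)) * (1 + min |β| |β - s * α|) ^ (-(c : ℝ))) :=
        mul_le_mul_of_nonneg_left hb2 (mul_nonneg hL hX'0)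
    _ = C * κ ^ (-(b : ℝ)) * κ ^ (-(c : ℝ)) * (1 + |α + β|) ^ m₁ * (1 + |β|) ^ m₂ *
        (1 + min |α + β| |β - s * α|) ^ (-(b : ℝ)) *
        (1 + min |β| |β - s * α|) ^ (-(c : ℝ)) := by ring


end
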